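/- Let β² = 2 − √2 (the smallest root of the Laguerre polynomial L_2(x) = 1 − 2x + x²/2) and define φ_2(z) = 1 − β² d̂(z) − (β² − β⁴/2) d̂(z)² with d̂(z) = z/(z − β²). Then φ_2 is L-stable: |φ_2(i y)| ≤ 1 for every real y, and φ_2(z) → 0 as real z → −∞. -/

import Mathlib

/-! At a root `b` of `L₂` the `z²` coefficient `L₂(b)` of the numerator of
`φ₂(z) (z - b)²` vanishes, leaving `φ₂(z) = b (b - (2 - b) z) / (z - b)²`; moreover
`L₂(b) = 0` means `(2 - b)² = 2`, so `|φ₂(iy)|² = b² (b² + 2y²) / (b² + y²)²`, which falls short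
of `1` by `y⁴ / (b² + y²)²`. As `z → -∞`, `d̂(z) → 1` and `φ₂(z) → 1 - b - (b - b²/2) = L₂(b) = 0`. -/

open Real Filter Complex

/-- The order-2 amplification factor with `β² = 2 - √2`, the smallest root of the
Laguerre polynomial `L_2(x) = 1 - 2x + x²/2`:
`φ₂(z) = 1 - β² d̂(z) - (β² - β⁴/2) d̂(z)²`, where `d̂(z) = z/(z - β²)`. -/
noncomputable def phi2 (z : ℂ) : ℂ :=
  let b2 : ℂ := (2 - Real.sqrt 2 : ℝ)
  1 - b2 * (z / (z - b2)) - (b2 - b2 ^ 2 / 2) * (z / (z - b2)) ^ 2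

open Topology

section Field

variable {K : Type*} [Field K]

def laguerre2 (x : K) : K := 1 - 2 * x + x ^ 2 / 2

def amplification2 (b z : K) : K :=
  1 - b * (z / (z - b)) - (b - b ^ 2 / 2) * (z / (z - b)) ^ 2

theorem sq_two_sub_eq_two_of_laguerre2_eq_zero [CharZero K] {x : K} (hx : laguerre2 x = 0) :
    (2 - x) ^ 2 = 2 := by
  unfold laguerre2 at hx
  linear_combination 2 * hx

theorem amplification2_eq_div [CharZero K] {b z : K} (hb : laguerre2 b = 0) (hz : z ≠ b) :
    amplification2 b z = b * (b - (2 - b) * z) / (z - b) ^ 2 := by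
  unfold laguerre2 at hb
  have hzb : z - b ≠ 0 := sub_ne_zero.mpr hz
  unfold amplification2
  field_simp
  linear_combination 2 * z ^ 2 * hb

end Field

theorem laguerre2_two_sub_sqrt_two : laguerre2 (2 - √2) = 0 := by
  have h := Real.sq_sqrt (show (0 : ℝ) ≤ 2 by norm_num)
  unfold laguerre2
  linear_combination h / 2

@[simp, norm_cast]
theorem ofReal_laguerre2 (x : ℝ) : ((laguerre2 x : ℝ) : ℂ) = laguerre2 (x : ℂ) := by
  simp [laguerre2]

@[simp, norm_cast]
theorem ofReal_amplification2 (b z : ℝ) :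
    ((amplification2 b z : ℝ) : ℂ) = amplification2 (b : ℂ) z := by
  simp [amplification2]

theorem tendsto_amplification2_atBot (b : ℝ) :
    Tendsto (amplification2 b) atBot (𝓝 (laguerre2 b)) := by
  have hinv : Tendsto (fun z : ℝ => b / (z - b)) atBot (𝓝 0) :=
    tendsto_const_nhds.div_atBot (tendsto_atBot_add_const_right _ (-b) tendsto_id)
  have hd : Tendsto (fun z : ℝ => z / (z - b)) atBot (𝓝 1) := by
    rw [← add_zero (1 : ℝ)]
    refine (tendsto_const_nhds.add hinv).congr' ?_
    filter_upwards [eventually_lt_atBot b] with z hz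
    have : z - b ≠ 0 := sub_ne_zero.mpr hz.ne
    field_simp
    ring
  have h : Tendsto (amplification2 b) atBot (𝓝 (1 - b * 1 - (b - b ^ 2 / 2) * 1 ^ 2)) :=
    (tendsto_const_nhds.sub (tendsto_const_nhds.mul hd)).sub (tendsto_const_nhds.mul (hd.pow 2))
  convert h using 2
  unfold laguerre2
  ring

theorem norm_amplification2_I_mul_le_one {b : ℝ} (hb : laguerre2 b = 0) (y : ℝ) :
    ‖amplification2 (b : ℂ) (I * y)‖ ≤ 1 := by
  have hb0 : b ≠ 0 := by
    rintro rfl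
    norm_num [laguerre2] at hb
  have hz : I * y ≠ b := fun h => hb0 (by simpa using congrArg re h.symm)
  have hnum : normSq ((b : ℂ) * (b - (2 - b) * (I * y))) = b ^ 2 * (b ^ 2 + 2 * y ^ 2) := by
    rw [show (b : ℂ) - (2 - b) * (I * y) = b + ((-(2 - b) * y : ℝ) : ℂ) * I by push_cast; ring,
      normSq_mul, normSq_ofReal, normSq_add_mul_I]
    linear_combination b ^ 2 * y ^ 2 * sq_two_sub_eq_two_of_laguerre2_eq_zero hb
  have hden : normSq (I * y - b) = b ^ 2 + y ^ 2 := by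
    rw [show I * y - b = ((-b : ℝ) : ℂ) + y * I by push_cast; ring, normSq_add_mul_I]
    ring
  rw [amplification2_eq_div (mod_cast hb) hz, ← sq_le_one_iff₀ (norm_nonneg _), Complex.sq_norm,
    normSq_div, map_pow, hnum, hden, div_le_one (by positivity)]
  linear_combination sq_nonneg (y ^ 2)

/-- The order-2 scheme with `β² = 2 - √2` is L-stable: `|φ₂(iy)| ≤ 1` for all real `y`,
and `φ₂(z) → 0` as real `z → -∞`. -/
theorem order_two_scheme_L_stable :
    (∀ y : ℝ, ‖phi2 (Complex.I * y)‖ ≤ 1) ∧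
    Filter.Tendsto (fun z : ℝ => phi2 (z : ℂ)) Filter.atBot (nhds 0) := by
  have hphi : phi2 = amplification2 ((2 - √2 : ℝ) : ℂ) := rfl
  refine ⟨fun y => hphi ▸ norm_amplification2_I_mul_le_one laguerre2_two_sub_sqrt_two y, ?_⟩
  simp_rw [hphi, ← ofReal_amplification2]
  simpa [laguerre2_two_sub_sqrt_two] using (tendsto_amplification2_atBot (2 - √2)).ofReal
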